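/- arXiv:1103.4007 — 5 statements merged into one kernel-verified Lean document; each statement's English description precedes it below -/
import Mathlib

section
/- Let M₁, M₂, Z₁, Z₂ be nonempty finite sets, n ≥ 1, and let p be a probability mass function on M₁ × M₂ × Z₁ⁿ × Z₂ⁿ of the form p(m₁, m₂, z₁ⁿ, z₂ⁿ) = p₁(m₁) · p₂(m₂) · ∏_{i=1}^n q_i(z_{1,i} | z₂^{i-1}, m₁) · ∏_{i=1}^n r_i(z_{2,i} | z₁^{i-1}, m₂), where p₁, p₂ are pmfs and each q_i(· | z₂^{i-1}, m₁) and r_i(· | z₁^{i-1}, m₂) is a pmf for every value of its conditioning arguments. Then M₁ and M₂ are conditionally independent given (Z₁ⁿ, Z₂ⁿ): for all m₁, m₂, z₁ⁿ, z₂ⁿ, p(m₁, m₂, z₁ⁿ, z₂ⁿ) · p_{Z₁ⁿ,Z₂ⁿ}(z₁ⁿ, z₂ⁿ) = p_{M₁,Z₁ⁿ,Z₂ⁿ}(m₁, z₁ⁿ, z₂ⁿ) · p_{M₂,Z₁ⁿ,Z₂ⁿ}(m₂, z₁ⁿ, z₂ⁿ). -/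
open Finset

theorem mul_sum_sum_eq_sum_mul_sum_of_eq_mul {α β R : Type*} [CommSemiring R]
    (s : Finset α) (t : Finset β) {f : α → β → R} (g : α → R) (h : β → R)
    (hf : ∀ a b, f a b = g a * h b) (a₀ : α) (b₀ : β) :
    f a₀ b₀ * ∑ a ∈ s, ∑ b ∈ t, f a b = (∑ b ∈ t, f a₀ b) * ∑ a ∈ s, f a b₀ := by
  simp only [hf, ← Finset.mul_sum, ← Finset.sum_mul]
  ring

theorem messages_condIndep_given_cribbing_general
    {M₁ M₂ Z₁ Z₂ : Type*} [Fintype M₁] [Fintype M₂] [Fintype Z₁] [Fintype Z₂]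
    (n : ℕ)
    (p : M₁ → M₂ → (Fin n → Z₁) → (Fin n → Z₂) → ℝ)
    (p₁ : M₁ → ℝ) (p₂ : M₂ → ℝ)
    (q : Fin n → Z₁ → (Fin n → Z₂) → M₁ → ℝ)
    (r : Fin n → Z₂ → (Fin n → Z₁) → M₂ → ℝ)
    (hp : ∀ m₁ m₂ z₁ z₂, p m₁ m₂ z₁ z₂ =
      p₁ m₁ * p₂ m₂ * (∏ i, q i (z₁ i) z₂ m₁) * (∏ i, r i (z₂ i) z₁ m₂)) :
    ∀ (m₁ : M₁) (m₂ : M₂) (z₁ : Fin n → Z₁) (z₂ : Fin n → Z₂),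
      p m₁ m₂ z₁ z₂ * (∑ a : M₁, ∑ b : M₂, p a b z₁ z₂)
        = (∑ b : M₂, p m₁ b z₁ z₂) * (∑ a : M₁, p a m₂ z₁ z₂) := by
  intro m₁ m₂ z₁ z₂
  -- For fixed `(z₁, z₂)`, the `q`-factors involve only `m₁` and the `r`-factors only `m₂`.
  refine mul_sum_sum_eq_sum_mul_sum_of_eq_mul (f := fun a b => p a b z₁ z₂) univ univ
    (fun a => p₁ a * ∏ i, q i (z₁ i) z₂ a) (fun b => p₂ b * ∏ i, r i (z₂ i) z₁ b)
    (fun a b => ?_) m₁ m₂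
  rw [hp]
  ring

/-- If a pmf `p` on `M₁ × M₂ × Z₁ⁿ × Z₂ⁿ` factors as
`p(m₁,m₂,z₁ⁿ,z₂ⁿ) = p₁(m₁)·p₂(m₂)·∏ᵢ qᵢ(z₁ᵢ | z₂^{i-1}, m₁)·∏ᵢ rᵢ(z₂ᵢ | z₁^{i-1}, m₂)`,
where each conditional `qᵢ, rᵢ` is a pmf depending on the other sequence only through its
strict prefix, then `M₁` and `M₂` are conditionally independent given `(Z₁ⁿ, Z₂ⁿ)`:
`p(m₁,m₂,z₁,z₂)·p(z₁,z₂) = p(m₁,z₁,z₂)·p(m₂,z₁,z₂)` where the marginals are obtained by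
summing out the omitted message coordinates. -/
theorem messages_condIndep_given_cribbing
    {M₁ M₂ Z₁ Z₂ : Type*} [Fintype M₁] [Fintype M₂] [Fintype Z₁] [Fintype Z₂]
    [Nonempty M₁] [Nonempty M₂] [Nonempty Z₁] [Nonempty Z₂]
    (n : ℕ) (hn : 1 ≤ n)
    (p : M₁ → M₂ → (Fin n → Z₁) → (Fin n → Z₂) → ℝ)
    (p₁ : M₁ → ℝ) (p₂ : M₂ → ℝ)
    (q : Fin n → Z₁ → (Fin n → Z₂) → M₁ → ℝ)
    (r : Fin n → Z₂ → (Fin n → Z₁) → M₂ → ℝ)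
    (hp₁0 : ∀ m₁, 0 ≤ p₁ m₁) (hp₁1 : ∑ m₁, p₁ m₁ = 1)
    (hp₂0 : ∀ m₂, 0 ≤ p₂ m₂) (hp₂1 : ∑ m₂, p₂ m₂ = 1)
    (hq0 : ∀ i z z₂ m₁, 0 ≤ q i z z₂ m₁)
    (hq1 : ∀ i z₂ m₁, ∑ z, q i z z₂ m₁ = 1)
    (hqpre : ∀ (i : Fin n) z z₂ z₂' m₁, (∀ j : Fin n, (j : ℕ) < (i : ℕ) → z₂ j = z₂' j) →
      q i z z₂ m₁ = q i z z₂' m₁)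
    (hr0 : ∀ i z z₁ m₂, 0 ≤ r i z z₁ m₂)
    (hr1 : ∀ i z₁ m₂, ∑ z, r i z z₁ m₂ = 1)
    (hrpre : ∀ (i : Fin n) z z₁ z₁' m₂, (∀ j : Fin n, (j : ℕ) < (i : ℕ) → z₁ j = z₁' j) →
      r i z z₁ m₂ = r i z z₁' m₂)
    (hp : ∀ m₁ m₂ z₁ z₂, p m₁ m₂ z₁ z₂ =
      p₁ m₁ * p₂ m₂ * (∏ i, q i (z₁ i) z₂ m₁) * (∏ i, r i (z₂ i) z₁ m₂)) :
    ∀ (m₁ : M₁) (m₂ : M₂) (z₁ : Fin n → Z₁) (z₂ : Fin n → Z₂),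
      p m₁ m₂ z₁ z₂ * (∑ a : M₁, ∑ b : M₂, p a b z₁ z₂)
        = (∑ b : M₂, p m₁ b z₁ z₂) * (∑ a : M₁, p a m₂ z₁ z₂) :=
  messages_condIndep_given_cribbing_general n p p₁ p₂ q r hp
end

section
/- Let M₁, M₂, Z₁, Z₂ be nonempty finite sets, n ≥ 1, and let p be a probability mass function on M₁ × M₂ × Z₁ⁿ × Z₂ⁿ of the form p(m₁, m₂, z₁ⁿ, z₂ⁿ) = p₁(m₁) · p₂(m₂) · ∏_{i=1}^n q_i(z_{1,i} | z₂^{i-1}, m₁) · ∏_{i=1}^n r_i(z_{2,i} | z₁^{i-1}, m₂), where p₁, p₂ are pmfs and each q_i(· | z₂^{i-1}, m₁) and r_i(· | z₁^{i-1}, m₂) is a pmf for every value of its conditioning arguments. Then for every pair of indices 0 ≤ t ≤ s ≤ n with s ≤ t + 1, M₁ and M₂ are conditionally independent given (Z₁^s, Z₂^t): for all m₁, m₂, z₁^s, z₂^t, p_{M₁,M₂,Z₁^s,Z₂^t}(m₁, m₂, z₁^s, z₂^t) · p_{Z₁^s,Z₂^t}(z₁^s, z₂^t) = p_{M₁,Z₁^s,Z₂^t}(m₁,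 z₁^s, z₂^t) · p_{M₂,Z₁^s,Z₂^t}(m₂, z₁^s, z₂^t). -/
/-!
For fixed prefixes, the marginal of `(M₁, M₂, Z₁^s, Z₂^t)` factors as
`p₁(m₁) ∏_{i<s} qᵢ · p₂(m₂) ∏_{i<t} rᵢ`, a function of `m₁` times a function of `m₂`, and
conditional independence is the resulting algebraic identity. The factorization is obtained by
summing out the free coordinates from the last one backwards, alternately `z₂,t` and `z₁,s`
(this alternation is what `t ≤ s ≤ t + 1` allows): the summed coordinate then occurs only in
its own kernel factor, since the later factors are already gone and the remaining factors of the
other encoder condition on strictly shorter prefixes, so that factor sums to `1`.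
-/

open Finset

/-- Marginal pmf of `(M₁, M₂, Z₁^s, Z₂^t)`: the probability that the messages equal
`(m₁, m₂)` and the sequences `Z₁ⁿ, Z₂ⁿ` agree with `w₁` on indices `< s` and with `w₂`
on indices `< t` (the remaining coordinates are summed out). -/
noncomputable def prefixMarginal {M₁ M₂ Z₁ Z₂ : Type*}
    [Fintype Z₁] [Fintype Z₂] {n : ℕ}
    (p : M₁ → M₂ → (Fin n → Z₁) → (Fin n → Z₂) → ℝ)
    (s t : ℕ) (m₁ : M₁) (m₂ : M₂) (w₁ : Fin n → Z₁) (w₂ : Fin n → Z₂) : ℝ :=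
  haveI := Classical.propDecidable
  ∑ z₁ : Fin n → Z₁, ∑ z₂ : Fin n → Z₂,
    if (∀ j : Fin n, (j : ℕ) < s → z₁ j = w₁ j) ∧ (∀ j : Fin n, (j : ℕ) < t → z₂ j = w₂ j)
    then p m₁ m₂ z₁ z₂ else 0

open Function

section PrefixAgreement

variable {n : ℕ} {Z : Type*}

lemma agree_succ_update_iff {t : ℕ} (ht : t < n) (w z : Fin n → Z) (c : Z) :
    (∀ j : Fin n, (j : ℕ) < t + 1 → z j = update w ⟨t, ht⟩ c j) ↔
      z ⟨t, ht⟩ = c ∧ ∀ j : Fin n, (j : ℕ) < t → z j = w j := by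
  constructor
  · intro h
    refine ⟨by simpa using h ⟨t, ht⟩ (Nat.lt_succ_self t), fun j hj => ?_⟩
    simpa [update_of_ne (show j ≠ ⟨t, ht⟩ from Fin.ne_of_val_ne hj.ne)] using h j (by omega)
  · rintro ⟨rfl, h⟩ j hj
    rcases (show (j : ℕ) < t ∨ j = ⟨t, ht⟩ by simp only [Fin.ext_iff]; omega) with hj | rfl
    · rw [update_of_ne (Fin.ne_of_val_ne hj.ne), h j hj]
    · rw [update_self]

open Classical in
lemma sum_ite_agree_eq_sum_update {R : Type*} [AddCommMonoid R] [Fintype Z] {t : ℕ}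
    (ht : t < n) (w : Fin n → Z) (F : (Fin n → Z) → R) :
    (∑ z, if ∀ j : Fin n, (j : ℕ) < t → z j = w j then F z else 0) =
      ∑ c, ∑ z, if ∀ j : Fin n, (j : ℕ) < t + 1 → z j = update w ⟨t, ht⟩ c j then F z else 0 := by
  rw [sum_comm]
  refine sum_congr rfl fun z _ => ?_
  simp only [agree_succ_update_iff, ite_and, sum_ite_eq, mem_univ, if_true]

end PrefixAgreement

section PrefixMarginal

variable {M₁ M₂ Z₁ Z₂ : Type*} [Fintype Z₁] [Fintype Z₂] {n : ℕ}

lemma prefixMarginal_comm (p : M₁ → M₂ → (Fin n → Z₁) → (Fin n → Z₂) → ℝ) (s t : ℕ)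
    (m₁ : M₁) (m₂ : M₂) (w₁ : Fin n → Z₁) (w₂ : Fin n → Z₂) :
    prefixMarginal p s t m₁ m₂ w₁ w₂ =
      prefixMarginal (fun b a z₂ z₁ => p a b z₁ z₂) t s m₂ m₁ w₂ w₁ := by
  classical
  unfold prefixMarginal
  rw [sum_comm]
  exact sum_congr rfl fun _ _ => sum_congr rfl fun _ _ => by congr 1; exact propext and_comm

lemma prefixMarginal_const_mul (c : M₁ → M₂ → ℝ)
    (p : M₁ → M₂ → (Fin n → Z₁) → (Fin n → Z₂) → ℝ) (s t : ℕ)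
    (m₁ : M₁) (m₂ : M₂) (w₁ : Fin n → Z₁) (w₂ : Fin n → Z₂) :
    prefixMarginal (fun a b z₁ z₂ => c a b * p a b z₁ z₂) s t m₁ m₂ w₁ w₂ =
      c m₁ m₂ * prefixMarginal p s t m₁ m₂ w₁ w₂ := by
  simp only [prefixMarginal, mul_sum, mul_ite, mul_zero]

lemma prefixMarginal_self (p : M₁ → M₂ → (Fin n → Z₁) → (Fin n → Z₂) → ℝ)
    (m₁ : M₁) (m₂ : M₂) (w₁ : Fin n → Z₁) (w₂ : Fin n → Z₂) :
    prefixMarginal p n n m₁ m₂ w₁ w₂ = p m₁ m₂ w₁ w₂ := by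
  classical
  simp [prefixMarginal, ← funext_iff, ite_and]

lemma prefixMarginal_eq_sum_update_right (p : M₁ → M₂ → (Fin n → Z₁) → (Fin n → Z₂) → ℝ)
    {t : ℕ} (ht : t < n) (s : ℕ) (m₁ : M₁) (m₂ : M₂) (w₁ : Fin n → Z₁) (w₂ : Fin n → Z₂) :
    prefixMarginal p s t m₁ m₂ w₁ w₂ =
      ∑ c : Z₂, prefixMarginal p s (t + 1) m₁ m₂ w₁ (update w₂ ⟨t, ht⟩ c) := by
  classical
  unfold prefixMarginal
  conv_rhs => rw [sum_comm]
  refine sum_congr rfl fun z₁ _ => ?_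
  by_cases hA : ∀ j : Fin n, (j : ℕ) < s → z₁ j = w₁ j
  · simp only [eq_true hA, true_and]
    -- `prefixMarginal` builds its `Fintype` instances from `Classical.propDecidable`
    convert sum_ite_agree_eq_sum_update ht w₂ (p m₁ m₂ z₁)
  · simp [eq_false hA]

end PrefixMarginal

section Cribbing

variable {M₁ M₂ Z₁ Z₂ : Type*} {n : ℕ}

def DependsOnPrefix (q : Fin n → Z₁ → (Fin n → Z₂) → M₁ → ℝ) : Prop :=
  ∀ (i : Fin n) z z₂ z₂' m₁, (∀ j : Fin n, (j : ℕ) < (i : ℕ) → z₂ j = z₂' j) →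
    q i z z₂ m₁ = q i z z₂' m₁

def cribbingKernel (q : Fin n → Z₁ → (Fin n → Z₂) → M₁ → ℝ)
    (r : Fin n → Z₂ → (Fin n → Z₁) → M₂ → ℝ) (m₁ : M₁) (m₂ : M₂)
    (z₁ : Fin n → Z₁) (z₂ : Fin n → Z₂) : ℝ :=
  (∏ i, q i (z₁ i) z₂ m₁) * ∏ i, r i (z₂ i) z₁ m₂

def prefixProd (q : Fin n → Z₁ → (Fin n → Z₂) → M₁ → ℝ) (s : ℕ)
    (w₁ : Fin n → Z₁) (w₂ : Fin n → Z₂) (m₁ : M₁) : ℝ :=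
  ∏ i ∈ univ.filter (fun i : Fin n => (i : ℕ) < s), q i (w₁ i) w₂ m₁

lemma cribbingKernel_swap (q : Fin n → Z₁ → (Fin n → Z₂) → M₁ → ℝ)
    (r : Fin n → Z₂ → (Fin n → Z₁) → M₂ → ℝ) :
    (fun m₂ m₁ z₂ z₁ => cribbingKernel q r m₁ m₂ z₁ z₂) = cribbingKernel r q := by
  ext
  exact mul_comm _ _

lemma prefixProd_self (q : Fin n → Z₁ → (Fin n → Z₂) → M₁ → ℝ)
    (w₁ : Fin n → Z₁) (w₂ : Fin n → Z₂) (m₁ : M₁) :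
    prefixProd q n w₁ w₂ m₁ = ∏ i, q i (w₁ i) w₂ m₁ := by
  simp [prefixProd]

lemma prefixProd_succ_update_left (q : Fin n → Z₁ → (Fin n → Z₂) → M₁ → ℝ) {t : ℕ}
    (ht : t < n) (w₁ : Fin n → Z₁) (c : Z₁) (w₂ : Fin n → Z₂) (m₁ : M₁) :
    prefixProd q (t + 1) (update w₁ ⟨t, ht⟩ c) w₂ m₁ =
      q ⟨t, ht⟩ c w₂ m₁ * prefixProd q t w₁ w₂ m₁ := by
  have hfilter : univ.filter (fun i : Fin n => (i : ℕ) < t + 1) =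
      insert ⟨t, ht⟩ (univ.filter fun i : Fin n => (i : ℕ) < t) := by
    ext i
    simp only [mem_filter, mem_insert, mem_univ, true_and, Fin.ext_iff]
    omega
  rw [prefixProd, hfilter, prod_insert (by simp), update_self]
  congr 1
  refine prod_congr rfl fun i hi => ?_
  rw [update_of_ne (Fin.ne_of_val_ne (mem_filter.1 hi).2.ne)]

lemma prefixProd_update_right_of_le {q : Fin n → Z₁ → (Fin n → Z₂) → M₁ → ℝ}
    (hq : DependsOnPrefix q) {s t : ℕ} (hst : s ≤ t + 1) (ht : t < n)
    (w₁ : Fin n → Z₁) (w₂ : Fin n → Z₂) (c : Z₂) (m₁ : M₁) :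
    prefixProd q s w₁ (update w₂ ⟨t, ht⟩ c) m₁ = prefixProd q s w₁ w₂ m₁ := by
  refine prod_congr rfl fun i hi => hq _ _ _ _ _ fun j hj => ?_
  have hi : (i : ℕ) < s := (mem_filter.1 hi).2
  exact update_of_ne (Fin.ne_of_val_ne (show (j : ℕ) ≠ t by omega)) _ _

end Cribbing

section CribbingMarginal

variable {M₁ M₂ Z₁ Z₂ : Type*} [Fintype Z₁] [Fintype Z₂] {n : ℕ}
  {q : Fin n → Z₁ → (Fin n → Z₂) → M₁ → ℝ} {r : Fin n → Z₂ → (Fin n → Z₁) → M₂ → ℝ}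

lemma prefixMarginal_cribbingKernel_of_succ_right (hq : DependsOnPrefix q)
    (hr1 : ∀ i z₁ m₂, ∑ z, r i z z₁ m₂ = 1) {s t : ℕ} (hst : s ≤ t + 1) (ht : t < n)
    (m₁ : M₁) (m₂ : M₂) (w₁ : Fin n → Z₁) (w₂ : Fin n → Z₂)
    (h : ∀ w₂', prefixMarginal (cribbingKernel q r) s (t + 1) m₁ m₂ w₁ w₂' =
      prefixProd q s w₁ w₂' m₁ * prefixProd r (t + 1) w₂' w₁ m₂) :
    prefixMarginal (cribbingKernel q r) s t m₁ m₂ w₁ w₂ =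
      prefixProd q s w₁ w₂ m₁ * prefixProd r t w₂ w₁ m₂ := by
  calc prefixMarginal (cribbingKernel q r) s t m₁ m₂ w₁ w₂
      = ∑ c, prefixProd q s w₁ w₂ m₁ * (r ⟨t, ht⟩ c w₁ m₂ * prefixProd r t w₂ w₁ m₂) := by
        simp only [prefixMarginal_eq_sum_update_right _ ht, h,
          prefixProd_update_right_of_le hq hst, prefixProd_succ_update_left]
    _ = prefixProd q s w₁ w₂ m₁ * prefixProd r t w₂ w₁ m₂ := by
        rw [← mul_sum, ← sum_mul, hr1, one_mul]

lemma prefixMarginal_cribbingKernel_of_succ_left (hr : DependsOnPrefix r)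
    (hq1 : ∀ i z₂ m₁, ∑ z, q i z z₂ m₁ = 1) {s t : ℕ} (hts : t ≤ s + 1) (hs : s < n)
    (m₁ : M₁) (m₂ : M₂) (w₁ : Fin n → Z₁) (w₂ : Fin n → Z₂)
    (h : ∀ w₁', prefixMarginal (cribbingKernel q r) (s + 1) t m₁ m₂ w₁' w₂ =
      prefixProd q (s + 1) w₁' w₂ m₁ * prefixProd r t w₂ w₁' m₂) :
    prefixMarginal (cribbingKernel q r) s t m₁ m₂ w₁ w₂ =
      prefixProd q s w₁ w₂ m₁ * prefixProd r t w₂ w₁ m₂ := by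
  rw [prefixMarginal_comm, cribbingKernel_swap, mul_comm]
  refine prefixMarginal_cribbingKernel_of_succ_right hr hq1 hts hs m₂ m₁ w₂ w₁ fun w₁' => ?_
  rw [← cribbingKernel_swap, ← prefixMarginal_comm, h, mul_comm]

theorem prefixMarginal_cribbingKernel (hq : DependsOnPrefix q) (hr : DependsOnPrefix r)
    (hq1 : ∀ i z₂ m₁, ∑ z, q i z z₂ m₁ = 1) (hr1 : ∀ i z₁ m₂, ∑ z, r i z z₁ m₂ = 1)
    {s t : ℕ} (hts : t ≤ s) (hst : s ≤ t + 1) (hsn : s ≤ n)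
    (m₁ : M₁) (m₂ : M₂) (w₁ : Fin n → Z₁) (w₂ : Fin n → Z₂) :
    prefixMarginal (cribbingKernel q r) s t m₁ m₂ w₁ w₂ =
      prefixProd q s w₁ w₂ m₁ * prefixProd r t w₂ w₁ m₂ := by
  obtain hlt | ⟨rfl, hs⟩ | ⟨rfl, rfl⟩ : t < s ∨ (s = t ∧ s < n) ∨ (s = n ∧ t = n) := by omega
  · exact prefixMarginal_cribbingKernel_of_succ_right hq hr1 hst (by omega) m₁ m₂ w₁ w₂
      fun w₂' => prefixMarginal_cribbingKernel hq hr hq1 hr1 (t := t + 1) (by omega) (by omega)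
        hsn m₁ m₂ w₁ w₂'
  · exact prefixMarginal_cribbingKernel_of_succ_left hr hq1 (by omega) hs m₁ m₂ w₁ w₂
      fun w₁' => prefixMarginal_cribbingKernel hq hr hq1 hr1 (by omega) le_rfl hs m₁ m₂ w₁' w₂
  · rw [prefixMarginal_self, prefixProd_self, prefixProd_self]
    rfl
termination_by (n - s) + (n - t)

end CribbingMarginal

lemma mul_sum_sum_eq_sum_mul_sum_of_eq_mul_s2 {α β R : Type*} [Fintype α] [Fintype β]
    [CommSemiring R] {P : α → β → R} (f : α → R) (g : β → R) (hP : ∀ a b, P a b = f a * g b)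
    (x : α) (y : β) :
    P x y * ∑ a, ∑ b, P a b = (∑ b, P x b) * ∑ a, P a y := by
  simp only [hP, ← mul_sum, ← sum_mul]
  ring

theorem messages_condIndep_given_cribbing_prefixes_general
    {M₁ M₂ Z₁ Z₂ : Type*} [Fintype M₁] [Fintype M₂] [Fintype Z₁] [Fintype Z₂]
    (n : ℕ)
    (p : M₁ → M₂ → (Fin n → Z₁) → (Fin n → Z₂) → ℝ)
    (p₁ : M₁ → ℝ) (p₂ : M₂ → ℝ)
    (q : Fin n → Z₁ → (Fin n → Z₂) → M₁ → ℝ)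
    (r : Fin n → Z₂ → (Fin n → Z₁) → M₂ → ℝ)
    (hq1 : ∀ i z₂ m₁, ∑ z, q i z z₂ m₁ = 1)
    (hqpre : ∀ (i : Fin n) z z₂ z₂' m₁, (∀ j : Fin n, (j : ℕ) < (i : ℕ) → z₂ j = z₂' j) →
      q i z z₂ m₁ = q i z z₂' m₁)
    (hr1 : ∀ i z₁ m₂, ∑ z, r i z z₁ m₂ = 1)
    (hrpre : ∀ (i : Fin n) z z₁ z₁' m₂, (∀ j : Fin n, (j : ℕ) < (i : ℕ) → z₁ j = z₁' j) →
      r i z z₁ m₂ = r i z z₁' m₂)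
    (hp : ∀ m₁ m₂ z₁ z₂, p m₁ m₂ z₁ z₂ =
      p₁ m₁ * p₂ m₂ * (∏ i, q i (z₁ i) z₂ m₁) * (∏ i, r i (z₂ i) z₁ m₂)) :
    ∀ (s t : ℕ), t ≤ s → s ≤ n → s ≤ t + 1 →
    ∀ (m₁ : M₁) (m₂ : M₂) (w₁ : Fin n → Z₁) (w₂ : Fin n → Z₂),
      prefixMarginal p s t m₁ m₂ w₁ w₂
          * (∑ a : M₁, ∑ b : M₂, prefixMarginal p s t a b w₁ w₂)
        = (∑ b : M₂, prefixMarginal p s t m₁ b w₁ w₂)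
          * (∑ a : M₁, prefixMarginal p s t a m₂ w₁ w₂) := by
  intro s t hts hsn hst m₁ m₂ w₁ w₂
  have hp_kernel : p = fun a b z₁ z₂ => p₁ a * p₂ b * cribbingKernel q r a b z₁ z₂ := by
    ext a b z₁ z₂
    rw [hp, cribbingKernel, mul_assoc]
  refine mul_sum_sum_eq_sum_mul_sum_of_eq_mul_s2 (P := fun a b => prefixMarginal p s t a b w₁ w₂)
    (fun a => p₁ a * prefixProd q s w₁ w₂ a)
    (fun b => p₂ b * prefixProd r t w₂ w₁ b) (fun a b => ?_) m₁ m₂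
  rw [hp_kernel, prefixMarginal_const_mul,
    prefixMarginal_cribbingKernel hqpre hrpre hq1 hr1 hts hst hsn]
  ring

/-- If a pmf `p` on `M₁ × M₂ × Z₁ⁿ × Z₂ⁿ` factors as
`p(m₁,m₂,z₁ⁿ,z₂ⁿ) = p₁(m₁)·p₂(m₂)·∏ᵢ qᵢ(z₁ᵢ | z₂^{i-1}, m₁)·∏ᵢ rᵢ(z₂ᵢ | z₁^{i-1}, m₂)`,
then for all indices `0 ≤ t ≤ s ≤ n` with `s ≤ t + 1`, the messages `M₁` and `M₂` are
conditionally independent given the prefixes `(Z₁^s, Z₂^t)`. -/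
theorem messages_condIndep_given_cribbing_prefixes
    {M₁ M₂ Z₁ Z₂ : Type*} [Fintype M₁] [Fintype M₂] [Fintype Z₁] [Fintype Z₂]
    [Nonempty M₁] [Nonempty M₂] [Nonempty Z₁] [Nonempty Z₂]
    (n : ℕ) (hn : 1 ≤ n)
    (p : M₁ → M₂ → (Fin n → Z₁) → (Fin n → Z₂) → ℝ)
    (p₁ : M₁ → ℝ) (p₂ : M₂ → ℝ)
    (q : Fin n → Z₁ → (Fin n → Z₂) → M₁ → ℝ)
    (r : Fin n → Z₂ → (Fin n → Z₁) → M₂ → ℝ)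
    (hp₁0 : ∀ m₁, 0 ≤ p₁ m₁) (hp₁1 : ∑ m₁, p₁ m₁ = 1)
    (hp₂0 : ∀ m₂, 0 ≤ p₂ m₂) (hp₂1 : ∑ m₂, p₂ m₂ = 1)
    (hq0 : ∀ i z z₂ m₁, 0 ≤ q i z z₂ m₁)
    (hq1 : ∀ i z₂ m₁, ∑ z, q i z z₂ m₁ = 1)
    (hqpre : ∀ (i : Fin n) z z₂ z₂' m₁, (∀ j : Fin n, (j : ℕ) < (i : ℕ) → z₂ j = z₂' j) →
      q i z z₂ m₁ = q i z z₂' m₁)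
    (hr0 : ∀ i z z₁ m₂, 0 ≤ r i z z₁ m₂)
    (hr1 : ∀ i z₁ m₂, ∑ z, r i z z₁ m₂ = 1)
    (hrpre : ∀ (i : Fin n) z z₁ z₁' m₂, (∀ j : Fin n, (j : ℕ) < (i : ℕ) → z₁ j = z₁' j) →
      r i z z₁ m₂ = r i z z₁' m₂)
    (hp : ∀ m₁ m₂ z₁ z₂, p m₁ m₂ z₁ z₂ =
      p₁ m₁ * p₂ m₂ * (∏ i, q i (z₁ i) z₂ m₁) * (∏ i, r i (z₂ i) z₁ m₂)) :
    ∀ (s t : ℕ), t ≤ s → s ≤ n → s ≤ t + 1 →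
    ∀ (m₁ : M₁) (m₂ : M₂) (w₁ : Fin n → Z₁) (w₂ : Fin n → Z₂),
      prefixMarginal p s t m₁ m₂ w₁ w₂
          * (∑ a : M₁, ∑ b : M₂, prefixMarginal p s t a b w₁ w₂)
        = (∑ b : M₂, prefixMarginal p s t m₁ b w₁ w₂)
          * (∑ a : M₁, prefixMarginal p s t a m₂ w₁ w₂) :=
  messages_condIndep_given_cribbing_prefixes_general n p p₁ p₂ q r hq1 hqpre hr1 hrpre hp
end

section
/- Let (U, Z₁, X₁, X₂, Y) be a random vector taking values in a product of nonempty finite sets such that: (i) Z₁ = g(X₁) almost surely for a deterministic function g; (ii) X₂ is conditionally independent of (X₁, Z₁) given U; (iii) Y is conditionally independent of U given (X₁, X₂). Then H(Z₁|U) + I(X₁;Y|X₂,Z₁,U) ≤ H(Z₁|X₂) + I(X₁;Y|X₂,Z₁). -/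
open Finset

/-- Probability that the (finitely supported) random variable `X` takes the value `b`,
under the pmf `p` on the finite sample space `Ω`. -/
noncomputable def prob {Ω β : Type*} [Fintype Ω] (p : Ω → ℝ) (X : Ω → β) (b : β) : ℝ :=
  haveI := Classical.propDecidable
  ∑ ω, if X ω = b then p ω else 0

/-- Shannon entropy `H(X)` (natural logarithm; any fixed base may be used). -/
noncomputable def ent {Ω β : Type*} [Fintype Ω] [Fintype β] (p : Ω → ℝ) (X : Ω → β) : ℝ :=
  -∑ b, prob p X b * Real.log (prob p X b)

/-- Conditional entropy `H(X|Y) = H(X,Y) - H(Y)`. -/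
noncomputable def condEnt {Ω β γ : Type*} [Fintype Ω] [Fintype β] [Fintype γ]
    (p : Ω → ℝ) (X : Ω → β) (Y : Ω → γ) : ℝ :=
  ent p (fun ω => (X ω, Y ω)) - ent p Y

/-- Mutual information `I(X;Y) = H(X) + H(Y) - H(X,Y)`. -/
noncomputable def mutInf {Ω β γ : Type*} [Fintype Ω] [Fintype β] [Fintype γ]
    (p : Ω → ℝ) (X : Ω → β) (Y : Ω → γ) : ℝ :=
  ent p X + ent p Y - ent p (fun ω => (X ω, Y ω))

/-- Conditional mutual information `I(X;Y|Z) = H(X|Z) + H(Y|Z) - H(X,Y|Z)`. -/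
noncomputable def condMutInf {Ω β γ δ : Type*} [Fintype Ω] [Fintype β] [Fintype γ] [Fintype δ]
    (p : Ω → ℝ) (X : Ω → β) (Y : Ω → γ) (Z : Ω → δ) : ℝ :=
  condEnt p X Z + condEnt p Y Z - condEnt p (fun ω => (X ω, Y ω)) Z

/-- `X` is conditionally independent of `Y` given `Z` (under the pmf `p`):
`P(X=x, Y=y, Z=z)·P(Z=z) = P(X=x, Z=z)·P(Y=y, Z=z)` for all `x, y, z`. -/
def CondIndepFun {Ω β γ δ : Type*} [Fintype Ω]
    (p : Ω → ℝ) (X : Ω → β) (Y : Ω → γ) (Z : Ω → δ) : Prop :=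
  ∀ (x : β) (y : γ) (z : δ),
    prob p (fun ω => (X ω, Y ω, Z ω)) (x, y, z) * prob p Z z
      = prob p (fun ω => (X ω, Z ω)) (x, z) * prob p (fun ω => (Y ω, Z ω)) (y, z)

/-! Both conditional mutual informations reduce to `H(Y | X₂, Z₁, ·) - H(Y | X₁, X₂)`: adjoining
`Z₁ = g(X₁)` to `X₁` changes nothing, and `Y` is independent of `U` given `(X₁, X₂)`. Since `X₂` is
independent of `Z₁` given `U`, `H(Z₁|U) = H(Z₁|X₂,U)`, and the chain rule turns the remaining
inequality into `H(Z₁,Y | X₂,U) ≤ H(Z₁,Y | X₂)`: conditioning reduces entropy. -/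

theorem sum_mul_log_nonpos {ι : Type*} [Fintype ι] {w r : ι → ℝ} (hw0 : ∀ i, 0 ≤ w i)
    (hw1 : ∑ i, w i = 1) (hr : ∀ i, w i ≠ 0 → 0 < r i) (hwr : ∑ i, w i * r i ≤ 1) :
    ∑ i, w i * Real.log (r i) ≤ 0 :=
  calc ∑ i, w i * Real.log (r i) ≤ ∑ i, w i * (r i - 1) := by
        refine sum_le_sum fun i _ => ?_
        by_cases hi : w i = 0
        · simp [hi]
        · exact mul_le_mul_of_nonneg_left (Real.log_le_sub_one_of_pos (hr i hi)) (hw0 i)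
    _ = ∑ i, w i * r i - 1 := by simp only [mul_sub, mul_one, sum_sub_distrib, hw1]
    _ ≤ 0 := by linarith

section Entropy

open Classical

variable {Ω α β β' γ γ' δ : Type*} {p : Ω → ℝ}

/-- `X` and `Y` separate the same points of the support of `p`: each is almost surely a function
of the other, so they carry the same information. -/
def InfoEquiv (p : Ω → ℝ) (X : Ω → β) (Y : Ω → γ) : Prop :=
  ∀ ω ω', p ω ≠ 0 → p ω' ≠ 0 → (X ω = X ω' ↔ Y ω = Y ω')

theorem InfoEquiv.refl (X : Ω → β) : InfoEquiv p X X := fun _ _ _ _ => Iff.rfl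

theorem InfoEquiv.prod {X : Ω → β} {X' : Ω → β'} {Y : Ω → γ} {Y' : Ω → γ'}
    (hX : InfoEquiv p X X') (hY : InfoEquiv p Y Y') :
    InfoEquiv p (fun ω => (X ω, Y ω)) (fun ω => (X' ω, Y' ω)) := fun ω ω' hω hω' => by
  simp only [Prod.mk.injEq, hX ω ω' hω hω', hY ω ω' hω hω']

variable [Fintype Ω]

theorem prob_nonneg (hp0 : ∀ ω, 0 ≤ p ω) (X : Ω → β) (b : β) : 0 ≤ prob p X b :=
  sum_nonneg fun ω _ => by split <;> simp [hp0 ω]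

theorem prob_pos_of_ne_zero (hp0 : ∀ ω, 0 ≤ p ω) (X : Ω → β) {ω : Ω} (hω : p ω ≠ 0) :
    0 < prob p X (X ω) :=
  calc 0 < p ω := (hp0 ω).lt_of_ne' hω
    _ = if X ω = X ω then p ω else 0 := by simp
    _ ≤ prob p X (X ω) :=
      single_le_sum (f := fun ω' => if X ω' = X ω then p ω' else 0)
        (fun ω' _ => by split <;> simp [hp0 ω']) (mem_univ ω)

theorem sum_prob_mul [Fintype β] (p : Ω → ℝ) (X : Ω → β) (f : β → ℝ) :
    ∑ b, prob p X b * f b = ∑ ω, p ω * f (X ω) := by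
  simp only [prob, sum_mul, ite_mul, zero_mul]
  rw [sum_comm]
  simp

theorem sum_prob [Fintype β] (hp1 : ∑ ω, p ω = 1) (X : Ω → β) : ∑ b, prob p X b = 1 := by
  simpa [hp1] using sum_prob_mul p X fun _ => 1

theorem sum_prob_prod_left [Fintype β] (X : Ω → β) (Y : Ω → γ) (c : γ) :
    ∑ b, prob p (fun ω => (X ω, Y ω)) (b, c) = prob p Y c := by
  unfold prob
  rw [sum_comm]
  simp [Prod.ext_iff, ite_and]

theorem sum_prob_prod_right [Fintype γ] (X : Ω → β) (Y : Ω → γ) (b : β) :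
    ∑ c, prob p (fun ω => (X ω, Y ω)) (b, c) = prob p X b := by
  unfold prob
  rw [sum_comm]
  simp [Prod.ext_iff, ite_and]

theorem ent_eq_neg_sum_log_prob [Fintype β] (p : Ω → ℝ) (X : Ω → β) :
    ent p X = -∑ ω, p ω * Real.log (prob p X (X ω)) := by
  rw [ent, sum_prob_mul]

theorem InfoEquiv.prob_eq {X : Ω → β} {Y : Ω → γ} (h : InfoEquiv p X Y) {ω : Ω} (hω : p ω ≠ 0) :
    prob p X (X ω) = prob p Y (Y ω) := by
  refine sum_congr rfl fun ω' _ => ?_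
  by_cases hω' : p ω' = 0
  · simp [hω']
  · simp only [eq_comm (a := X ω'), eq_comm (a := Y ω'), h ω ω' hω hω']

theorem InfoEquiv.ent_eq [Fintype β] [Fintype γ] {X : Ω → β} {Y : Ω → γ} (h : InfoEquiv p X Y) :
    ent p X = ent p Y := by
  rw [ent_eq_neg_sum_log_prob, ent_eq_neg_sum_log_prob]
  congr 1
  refine sum_congr rfl fun ω _ => ?_
  by_cases hω : p ω = 0
  · simp [hω]
  · rw [h.prob_eq hω]

theorem condEnt_congr [Fintype β] [Fintype β'] [Fintype γ] [Fintype γ']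
    {X : Ω → β} {X' : Ω → β'} {Y : Ω → γ} {Y' : Ω → γ'}
    (hX : InfoEquiv p X X') (hY : InfoEquiv p Y Y') :
    condEnt p X Y = condEnt p X' Y' := by
  rw [condEnt, condEnt, (hX.prod hY).ent_eq, hY.ent_eq]

theorem condEnt_prod_eq_add [Fintype β] [Fintype γ] [Fintype δ]
    (X : Ω → β) (Y : Ω → γ) (Z : Ω → δ) :
    condEnt p (fun ω => (X ω, Y ω)) Z
      = condEnt p X Z + condEnt p Y (fun ω => (X ω, Z ω)) := by
  have h : InfoEquiv p (fun ω => ((X ω, Y ω), Z ω)) (fun ω => (Y ω, X ω, Z ω)) :=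
    fun _ _ _ _ => by simp only [Prod.mk.injEq]; tauto
  rw [condEnt, condEnt, condEnt, h.ent_eq]
  ring

theorem condMutInf_eq_condEnt_sub_condEnt [Fintype β] [Fintype γ] [Fintype δ]
    (X : Ω → β) (Y : Ω → γ) (Z : Ω → δ) :
    condMutInf p X Y Z = condEnt p Y Z - condEnt p Y (fun ω => (X ω, Z ω)) := by
  rw [condMutInf, condEnt_prod_eq_add]
  ring

theorem CondIndepFun.comp_right [Fintype γ] {X : Ω → β} {Y : Ω → γ} {Z : Ω → δ}
    (h : CondIndepFun p X Y Z) (f : γ → γ') :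
    CondIndepFun p X (fun ω => f (Y ω)) Z := by
  intro x y' z
  have hXYZ : prob p (fun ω => (X ω, f (Y ω), Z ω)) (x, y', z)
      = ∑ y with f y = y', prob p (fun ω => (X ω, Y ω, Z ω)) (x, y, z) := by
    unfold prob
    rw [sum_comm]
    refine sum_congr rfl fun ω _ => ?_
    simp [Prod.ext_iff, ite_and]
  have hYZ : prob p (fun ω => (f (Y ω), Z ω)) (y', z)
      = ∑ y with f y = y', prob p (fun ω => (Y ω, Z ω)) (y, z) := by
    unfold prob
    rw [sum_comm]
    refine sum_congr rfl fun ω _ => ?_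
    simp [Prod.ext_iff, ite_and]
  rw [hXYZ, hYZ, sum_mul, mul_sum]
  exact sum_congr rfl fun y _ => h x y z

theorem CondIndepFun.ent_add_ent [Fintype β] [Fintype γ] [Fintype δ]
    {X : Ω → β} {Y : Ω → γ} {Z : Ω → δ}
    (hp0 : ∀ ω, 0 ≤ p ω) (h : CondIndepFun p X Y Z) :
    ent p (fun ω => (X ω, Y ω, Z ω)) + ent p Z
      = ent p (fun ω => (X ω, Z ω)) + ent p (fun ω => (Y ω, Z ω)) := by
  simp only [ent_eq_neg_sum_log_prob, ← neg_add, ← sum_add_distrib, ← mul_add]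
  congr 2 with ω
  by_cases hω : p ω = 0
  · simp [hω]
  rw [← Real.log_mul (prob_pos_of_ne_zero hp0 _ hω).ne' (prob_pos_of_ne_zero hp0 Z hω).ne',
    ← Real.log_mul (prob_pos_of_ne_zero hp0 (fun ω => (X ω, Z ω)) hω).ne'
      (prob_pos_of_ne_zero hp0 (fun ω => (Y ω, Z ω)) hω).ne', h]

theorem CondIndepFun.condEnt_prod_left [Fintype β] [Fintype γ] [Fintype δ]
    {X : Ω → β} {Y : Ω → γ} {Z : Ω → δ}
    (hp0 : ∀ ω, 0 ≤ p ω) (h : CondIndepFun p X Y Z) :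
    condEnt p X (fun ω => (Y ω, Z ω)) = condEnt p X Z := by
  rw [condEnt, condEnt]
  linarith [h.ent_add_ent hp0]

theorem CondIndepFun.condEnt_prod_right [Fintype β] [Fintype γ] [Fintype δ]
    {X : Ω → β} {Y : Ω → γ} {Z : Ω → δ}
    (hp0 : ∀ ω, 0 ≤ p ω) (h : CondIndepFun p X Y Z) :
    condEnt p Y (fun ω => (X ω, Z ω)) = condEnt p Y Z := by
  have hswap : InfoEquiv p (fun ω => (Y ω, X ω, Z ω)) (fun ω => (X ω, Y ω, Z ω)) :=
    fun _ _ _ _ => by simp only [Prod.mk.injEq]; tauto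
  rw [condEnt, condEnt, hswap.ent_eq]
  linarith [h.ent_add_ent hp0]

theorem sum_mul_div_prob_le [Fintype β] (hp0 : ∀ ω, 0 ≤ p ω) (X : Ω → β) {F : β → ℝ}
    (hF : ∀ b, 0 ≤ F b) : ∑ ω, p ω * (F (X ω) / prob p X (X ω)) ≤ ∑ b, F b := by
  rw [← sum_prob_mul p X fun b => F b / prob p X b]
  refine sum_le_sum fun b _ => ?_
  rcases (prob_nonneg hp0 X b).eq_or_lt with h | h
  · simp [← h, hF b]
  · rw [mul_div_cancel₀ _ h.ne']

theorem sum_prob_mul_prob_div_prob [Fintype β] [Fintype γ] [Fintype δ] (hp1 : ∑ ω, p ω = 1)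
    (X : Ω → β) (Y : Ω → γ) (Z : Ω → δ) :
    ∑ v : β × γ × δ, prob p (fun ω => (X ω, Y ω)) (v.1, v.2.1)
      * prob p (fun ω => (Y ω, Z ω)) v.2 / prob p Y v.2.1 = 1 := by
  simp only [Fintype.sum_prod_type]
  rw [sum_comm]
  simp only [← sum_div, ← mul_sum, ← sum_mul, sum_prob_prod_left, sum_prob_prod_right,
    mul_self_div_self, sum_prob hp1 Y]

theorem condEnt_prod_le [Fintype β] [Fintype γ] [Fintype δ] (hp0 : ∀ ω, 0 ≤ p ω)
    (hp1 : ∑ ω, p ω = 1) (X : Ω → β) (Y : Ω → γ) (Z : Ω → δ) :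
    condEnt p X (fun ω => (Y ω, Z ω)) ≤ condEnt p X Y := by
  -- Gibbs' inequality for the ratio `r = p(x,y) p(y,z) / (p(x,y,z) p(y))`, whose mean is at most 1.
  let F : β × γ × δ → ℝ := fun v =>
    prob p (fun ω => (X ω, Y ω)) (v.1, v.2.1) * prob p (fun ω => (Y ω, Z ω)) v.2 / prob p Y v.2.1
  have hF : ∀ v, 0 ≤ F v := fun v =>
    div_nonneg (mul_nonneg (prob_nonneg hp0 _ _) (prob_nonneg hp0 _ _)) (prob_nonneg hp0 _ _)
  let r : Ω → ℝ := fun ω =>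
    F (X ω, Y ω, Z ω) / prob p (fun ω => (X ω, Y ω, Z ω)) (X ω, Y ω, Z ω)
  have hpos : ∀ ω, p ω ≠ 0 →
      0 < prob p (fun ω => (X ω, Y ω)) (X ω, Y ω) ∧ 0 < prob p (fun ω => (Y ω, Z ω)) (Y ω, Z ω)
        ∧ 0 < prob p Y (Y ω) ∧ 0 < prob p (fun ω => (X ω, Y ω, Z ω)) (X ω, Y ω, Z ω) :=
    fun ω hω => ⟨prob_pos_of_ne_zero hp0 _ hω, prob_pos_of_ne_zero hp0 _ hω,
      prob_pos_of_ne_zero hp0 _ hω, prob_pos_of_ne_zero hp0 _ hω⟩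
  have hr : ∀ ω, p ω ≠ 0 → 0 < r ω := fun ω hω => by
    obtain ⟨h₁, h₂, h₃, h₄⟩ := hpos ω hω
    simp only [r, F]
    positivity
  have hgap : condEnt p X (fun ω => (Y ω, Z ω)) - condEnt p X Y
      = ∑ ω, p ω * Real.log (r ω) := by
    simp only [condEnt, ent_eq_neg_sum_log_prob, ← sum_sub_distrib, ← sum_neg_distrib]
    refine sum_congr rfl fun ω _ => ?_
    by_cases hω : p ω = 0
    · simp [hω]
    obtain ⟨h₁, h₂, h₃, h₄⟩ := hpos ω hω
    simp only [r, F]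
    rw [Real.log_div (by positivity) h₄.ne', Real.log_div (by positivity) h₃.ne',
      Real.log_mul h₁.ne' h₂.ne']
    ring
  have hmass : ∑ ω, p ω * r ω ≤ 1 :=
    (sum_mul_div_prob_le hp0 (fun ω => (X ω, Y ω, Z ω)) hF).trans
      (sum_prob_mul_prob_div_prob hp1 X Y Z).le
  linarith [sum_mul_log_nonpos hp0 hp1 hr hmass]

theorem condEnt_add_condEnt_prod_le [Fintype α] [Fintype β] [Fintype γ] [Fintype δ]
    (hp0 : ∀ ω, 0 ≤ p ω) (hp1 : ∑ ω, p ω = 1)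
    (A : Ω → α) (X : Ω → β) (Y : Ω → γ) (Z : Ω → δ) :
    condEnt p A (fun ω => (Y ω, Z ω)) + condEnt p X (fun ω => (Y ω, A ω, Z ω))
      ≤ condEnt p A Y + condEnt p X (fun ω => (Y ω, A ω)) :=
  calc condEnt p A (fun ω => (Y ω, Z ω)) + condEnt p X (fun ω => (Y ω, A ω, Z ω))
      _ = condEnt p (fun ω => (A ω, X ω)) (fun ω => (Y ω, Z ω)) := by
        rw [condEnt_prod_eq_add]
        exact congrArg _ (condEnt_congr (.refl _) fun _ _ _ _ => by
          simp only [Prod.mk.injEq]; tauto)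
      _ ≤ condEnt p (fun ω => (A ω, X ω)) Y := condEnt_prod_le hp0 hp1 _ Y Z
      _ = condEnt p A Y + condEnt p X (fun ω => (Y ω, A ω)) := by
        rw [condEnt_prod_eq_add]
        exact congrArg _ (condEnt_congr (.refl _) fun _ _ _ _ => by
          simp only [Prod.mk.injEq]; tauto)

end Entropy

theorem condEnt_add_condMutInf_le_general
    {U Z₁ X₁ X₂ Y : Type*} [Fintype U] [Fintype Z₁] [Fintype X₁] [Fintype X₂] [Fintype Y]
    (p : U × Z₁ × X₁ × X₂ × Y → ℝ)
    (hp0 : ∀ ω, 0 ≤ p ω) (hp1 : ∑ ω, p ω = 1)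
    (g : X₁ → Z₁)
    (hdet : ∀ ω, p ω ≠ 0 → ω.2.1 = g ω.2.2.1)
    (hci1 : CondIndepFun p (fun ω => ω.2.2.2.1) (fun ω => (ω.2.2.1, ω.2.1)) (fun ω => ω.1))
    (hci2 : CondIndepFun p (fun ω => ω.2.2.2.2) (fun ω => ω.1)
      (fun ω => (ω.2.2.1, ω.2.2.2.1))) :
    condEnt p (fun ω => ω.2.1) (fun ω => ω.1)
        + condMutInf p (fun ω => ω.2.2.1) (fun ω => ω.2.2.2.2)
            (fun ω => (ω.2.2.2.1, ω.2.1, ω.1))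
      ≤ condEnt p (fun ω => ω.2.1) (fun ω => ω.2.2.2.1)
        + condMutInf p (fun ω => ω.2.2.1) (fun ω => ω.2.2.2.2)
            (fun ω => (ω.2.2.2.1, ω.2.1)) := by
  have hZ : condEnt p (fun ω => ω.2.1) (fun ω => ω.1)
      = condEnt p (fun ω => ω.2.1) (fun ω => (ω.2.2.2.1, ω.1)) :=
    ((hci1.comp_right Prod.snd).condEnt_prod_right hp0).symm
  have hY₁ : condEnt p (fun ω => ω.2.2.2.2) (fun ω => (ω.2.2.1, ω.2.2.2.1, ω.2.1, ω.1))
      = condEnt p (fun ω => ω.2.2.2.2) (fun ω => (ω.2.2.1, ω.2.2.2.1)) := by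
    rw [← hci2.condEnt_prod_left hp0]
    exact condEnt_congr (.refl _) fun ω ω' hω hω' => by
      simp only [Prod.mk.injEq, hdet ω hω, hdet ω' hω']
      grind
  have hY₂ : condEnt p (fun ω => ω.2.2.2.2) (fun ω => (ω.2.2.1, ω.2.2.2.1, ω.2.1))
      = condEnt p (fun ω => ω.2.2.2.2) (fun ω => (ω.2.2.1, ω.2.2.2.1)) :=
    condEnt_congr (.refl _) fun ω ω' hω hω' => by
      simp only [Prod.mk.injEq, hdet ω hω, hdet ω' hω']
      grind
  rw [condMutInf_eq_condEnt_sub_condEnt, condMutInf_eq_condEnt_sub_condEnt, hY₁, hY₂, hZ]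
  linarith [condEnt_add_condEnt_prod_le hp0 hp1 (fun ω => ω.2.1) (fun ω => ω.2.2.2.2)
    (fun ω => ω.2.2.2.1) (fun ω => ω.1)]

/-- For a random vector `(U, Z₁, X₁, X₂, Y)` over finite sets with
(i) `Z₁ = g(X₁)` a.s., (ii) `X₂` conditionally independent of `(X₁, Z₁)` given `U`,
(iii) `Y` conditionally independent of `U` given `(X₁, X₂)`, one has
`H(Z₁|U) + I(X₁;Y|X₂,Z₁,U) ≤ H(Z₁|X₂) + I(X₁;Y|X₂,Z₁)`. -/
theorem condEnt_add_condMutInf_le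
    {U Z₁ X₁ X₂ Y : Type*} [Fintype U] [Fintype Z₁] [Fintype X₁] [Fintype X₂] [Fintype Y]
    [Nonempty U] [Nonempty Z₁] [Nonempty X₁] [Nonempty X₂] [Nonempty Y]
    (p : U × Z₁ × X₁ × X₂ × Y → ℝ)
    (hp0 : ∀ ω, 0 ≤ p ω) (hp1 : ∑ ω, p ω = 1)
    (g : X₁ → Z₁)
    (hdet : ∀ ω, p ω ≠ 0 → ω.2.1 = g ω.2.2.1)
    (hci1 : CondIndepFun p (fun ω => ω.2.2.2.1) (fun ω => (ω.2.2.1, ω.2.1)) (fun ω => ω.1))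
    (hci2 : CondIndepFun p (fun ω => ω.2.2.2.2) (fun ω => ω.1)
      (fun ω => (ω.2.2.1, ω.2.2.2.1))) :
    condEnt p (fun ω => ω.2.1) (fun ω => ω.1)
        + condMutInf p (fun ω => ω.2.2.1) (fun ω => ω.2.2.2.2)
            (fun ω => (ω.2.2.2.1, ω.2.1, ω.1))
      ≤ condEnt p (fun ω => ω.2.1) (fun ω => ω.2.2.2.1)
        + condMutInf p (fun ω => ω.2.2.1) (fun ω => ω.2.2.2.2)
            (fun ω => (ω.2.2.2.1, ω.2.1)) :=
  condEnt_add_condMutInf_le_general p hp0 hp1 g hdet hci1 hci2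
end

section
/- Let H_b : [0,1] → ℝ be the binary entropy function in base 2, H_b(p) = -p·log₂ p - (1-p)·log₂(1-p) with the convention 0·log₂ 0 = 0. Then the maximum over α ∈ [0,1] of min(α, H_b((1+α)/2) + α - 1) equals H_b(1/5) - 2/5, and it is attained at α = 3/5. -/
/-!
Gibbs' inequality bounds `H_b(p)` by the cross entropy of `(p, 1 - p)` against `(4/5, 1/5)`, which
is the affine function `log₂ 5 - 2p`. At `p = (1 + α)/2` this makes the second argument of the
`min` at most `log₂ 5 - 2` for every `α`, with equality at `α = 3/5`; there the first argument
`3/5` is larger still because `5⁵ ≤ 2¹³`.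
-/

/-- The binary entropy function in base 2, `H_b(p) = -p·log₂ p - (1-p)·log₂(1-p)`,
with the convention `0·log₂ 0 = 0` (Mathlib's `Real.logb` satisfies `logb 2 0 = 0`). -/
noncomputable def binEnt (p : ℝ) : ℝ := -p * Real.logb 2 p - (1 - p) * Real.logb 2 (1 - p)

open Real

noncomputable def binCrossEnt (p q : ℝ) : ℝ := -p * logb 2 q - (1 - p) * logb 2 (1 - q)

lemma binEnt_eq_binCrossEnt_self (p : ℝ) : binEnt p = binCrossEnt p p := rfl

lemma binEnt_one_sub (p : ℝ) : binEnt (1 - p) = binEnt p := by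
  simp only [binEnt, sub_sub_cancel]
  ring

lemma mul_log_add_sub_le_mul_log {x q : ℝ} (hx : 0 ≤ x) (hq : 0 < q) :
    x * log q + x - q ≤ x * log x := by
  rcases hx.eq_or_lt with rfl | hx
  · simpa using hq.le
  · have h := log_le_sub_one_of_pos (div_pos hq hx)
    rw [log_div hq.ne' hx.ne', le_sub_iff_add_le] at h
    have h' := mul_le_mul_of_nonneg_left h hx.le
    rw [mul_div_cancel₀ _ hx.ne'] at h'
    linarith

lemma binEnt_le_binCrossEnt {p q : ℝ} (hp₀ : 0 ≤ p) (hp₁ : p ≤ 1) (hq₀ : 0 < q) (hq₁ : q < 1) :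
    binEnt p ≤ binCrossEnt p q := by
  have hp := mul_log_add_sub_le_mul_log hp₀ hq₀
  have hp' := mul_log_add_sub_le_mul_log (sub_nonneg.2 hp₁) (sub_pos.2 hq₁)
  calc binEnt p = (-p * log p - (1 - p) * log (1 - p)) / log 2 := by
        simp only [binEnt, logb]; ring
    _ ≤ (-p * log q - (1 - p) * log (1 - q)) / log 2 :=
        div_le_div_of_nonneg_right (by linarith) (log_pos one_lt_two).le
    _ = binCrossEnt p q := by simp only [binCrossEnt, logb]; ring

lemma binCrossEnt_four_fifths (p : ℝ) : binCrossEnt p (4 / 5) = logb 2 5 - 2 * p := by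
  have h₄ : logb 2 4 = 2 := by
    rw [show (4 : ℝ) = 2 ^ 2 by norm_num, logb_pow, logb_self_eq_one one_lt_two]
    norm_num
  rw [binCrossEnt, show (1 : ℝ) - 4 / 5 = 5⁻¹ by norm_num, logb_inv,
    logb_div (by norm_num) (by norm_num), h₄]
  ring

lemma logb_two_five_le : logb 2 5 ≤ 13 / 5 := by
  have h := logb_le_logb_of_le (b := 2) one_lt_two (by norm_num)
    (show (5 : ℝ) ^ 5 ≤ 2 ^ 13 by norm_num)
  rw [logb_pow, logb_pow, logb_self_eq_one one_lt_two] at h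
  push_cast at h
  linarith

/-- The maximum over `α ∈ [0,1]` of `min(α, H_b((1+α)/2) + α - 1)` equals
`H_b(1/5) - 2/5`, and it is attained at `α = 3/5`. -/
theorem max_min_eq_binEnt_fifth :
    IsGreatest ((fun α : ℝ => min α (binEnt ((1 + α) / 2) + α - 1)) '' Set.Icc (0 : ℝ) 1)
      (binEnt (1 / 5) - 2 / 5)
    ∧ min ((3 : ℝ) / 5) (binEnt ((1 + 3 / 5) / 2) + 3 / 5 - 1) = binEnt (1 / 5) - 2 / 5 := by
  have h₄ : binEnt (4 / 5) = logb 2 5 - 8 / 5 := by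
    rw [binEnt_eq_binCrossEnt_self, binCrossEnt_four_fifths]; ring
  have h₁ : binEnt (1 / 5) = logb 2 5 - 8 / 5 := by
    rw [← h₄, ← binEnt_one_sub]; norm_num
  have hattain : min ((3 : ℝ) / 5) (binEnt ((1 + 3 / 5) / 2) + 3 / 5 - 1)
      = binEnt (1 / 5) - 2 / 5 := by
    rw [show ((1 : ℝ) + 3 / 5) / 2 = 4 / 5 by norm_num, h₄, h₁,
      min_eq_right (by linarith [logb_two_five_le])]
    ring
  refine ⟨⟨⟨3 / 5, ⟨by norm_num, by norm_num⟩, hattain⟩, ?_⟩, hattain⟩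
  rintro _ ⟨α, ⟨hα₀, hα₁⟩, rfl⟩
  have hbound := binEnt_le_binCrossEnt (p := (1 + α) / 2) (q := 4 / 5)
    (by linarith) (by linarith) (by norm_num) (by norm_num)
  rw [binCrossEnt_four_fifths] at hbound
  exact (min_le_right _ _).trans (by linarith)
end

section
/- Let H_b : [0,1] → ℝ be the binary entropy function in base 2, H_b(p) = -p·log₂ p - (1-p)·log₂(1-p) with the convention 0·log₂ 0 = 0. Then there exists a unique α* ∈ (0,1] with H_b(α*) = α*, and the maximum over α ∈ [0,1] of min(α, H_b(α)) equals α* and is attained at α = α*. -/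
/-!
`binEnt` is Mathlib's `Real.binEntropy` rescaled by `1 / log 2`, so it is strictly concave on
`[0, 1]` and vanishes at `0`. Hence `binEnt x / x` is strictly decreasing on `(0, 1]`, and a fixed
point, where this ratio is `1`, is unique; it exceeds `1/2` because the ratio is `2` at `1/2`.
Existence follows from the intermediate value theorem on `[1/2, 1]`. For `α` at most the fixed
point `a`, `min α (binEnt α) ≤ α ≤ a`; beyond `a`, `binEnt` is decreasing, so `binEnt α < a`.
-/

open Real Set

lemma binEnt_eq_binEntropy_div (p : ℝ) : binEnt p = binEntropy p / log 2 := by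
  rw [binEnt, binEntropy, log_inv, log_inv, logb, logb]
  ring

@[simp] lemma binEnt_zero : binEnt 0 = 0 := by simp [binEnt_eq_binEntropy_div]

@[simp] lemma binEnt_one : binEnt 1 = 0 := by simp [binEnt_eq_binEntropy_div]

@[simp] lemma binEnt_two_inv : binEnt 2⁻¹ = 1 := by
  rw [binEnt_eq_binEntropy_div, binEntropy_two_inv, div_self (log_pos one_lt_two).ne']

lemma continuous_binEnt : Continuous binEnt := by
  simpa only [← binEnt_eq_binEntropy_div] using binEntropy_continuous.div_const (log 2)

lemma strictConcaveOn_binEnt : StrictConcaveOn ℝ (Icc 0 1) binEnt := by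
  refine ⟨convex_Icc 0 1, fun x hx y hy hxy a b ha hb hab => ?_⟩
  have h := strictConcave_binEntropy.2 hx hy hxy ha hb hab
  simp only [smul_eq_mul, binEnt_eq_binEntropy_div] at h ⊢
  rw [mul_div_assoc', mul_div_assoc', ← add_div]
  exact div_lt_div_of_pos_right h (log_pos one_lt_two)

lemma strictAntiOn_binEnt : StrictAntiOn binEnt (Icc 2⁻¹ 1) := fun x hx y hy hxy => by
  simp only [binEnt_eq_binEntropy_div]
  exact div_lt_div_of_pos_right (binEntropy_strictAntiOn hx hy hxy) (log_pos one_lt_two)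

lemma strictAntiOn_binEnt_div_self : StrictAntiOn (fun x => binEnt x / x) (Ioc 0 1) :=
  fun x hx y hy hxy => by
    simpa using strictConcaveOn_binEnt.secant_strict_mono (a := 0) (by simp)
      (Ioc_subset_Icc_self hx) (Ioc_subset_Icc_self hy) hx.1.ne' hy.1.ne' hxy

lemma binEnt_div_self_eq_one {a : ℝ} (ha : a ∈ Ioc 0 1) (hfa : binEnt a = a) :
    binEnt a / a = 1 := by
  rw [hfa, div_self ha.1.ne']

lemma binEnt_eq_self_injOn {a b : ℝ} (ha : a ∈ Ioc 0 1) (hfa : binEnt a = a)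
    (hb : b ∈ Ioc 0 1) (hfb : binEnt b = b) : a = b :=
  strictAntiOn_binEnt_div_self.injOn ha hb <| by
    rw [binEnt_div_self_eq_one ha hfa, binEnt_div_self_eq_one hb hfb]

lemma two_inv_lt_of_binEnt_eq_self {a : ℝ} (ha : a ∈ Ioc 0 1) (hfa : binEnt a = a) :
    2⁻¹ < a := by
  have half_mem : (2⁻¹ : ℝ) ∈ Ioc 0 1 := by norm_num
  rw [← strictAntiOn_binEnt_div_self.lt_iff_gt ha half_mem, binEnt_div_self_eq_one ha hfa,
    binEnt_two_inv]
  norm_num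

lemma exists_binEnt_eq_self : ∃ a ∈ Icc (2⁻¹ : ℝ) 1, binEnt a = a := by
  have hcont : ContinuousOn (fun x => binEnt x - x) (Icc 2⁻¹ 1) :=
    (continuous_binEnt.sub continuous_id).continuousOn
  obtain ⟨a, ha, hfa⟩ := intermediate_value_Icc' (by norm_num) hcont
    (show (0 : ℝ) ∈ Icc (binEnt 1 - 1) (binEnt 2⁻¹ - 2⁻¹) by
      rw [binEnt_one, binEnt_two_inv]; norm_num)
  exact ⟨a, ha, sub_eq_zero.mp hfa⟩

lemma min_binEnt_le_of_binEnt_eq_self {a α : ℝ} (ha : a ∈ Ioc 0 1) (hfa : binEnt a = a)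
    (hα : α ∈ Icc 0 1) : min α (binEnt α) ≤ a := by
  rcases le_or_gt α a with hαa | haα
  · exact (min_le_left _ _).trans hαa
  · have ha_half := two_inv_lt_of_binEnt_eq_self ha hfa
    have hlt := strictAntiOn_binEnt ⟨ha_half.le, ha.2⟩ ⟨ha_half.le.trans haα.le, hα.2⟩ haα
    exact (min_le_right _ _).trans (hfa ▸ hlt.le)

/-- There is a unique `α* ∈ (0,1]` with `H_b(α*) = α*`, and the maximum
over `α ∈ [0,1]` of `min(α, H_b(α))` equals `α*` and is attained at `α = α*`. -/
theorem max_min_self_binEnt :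
    (∃! a : ℝ, a ∈ Set.Ioc (0 : ℝ) 1 ∧ binEnt a = a)
    ∧ ∀ a : ℝ, a ∈ Set.Ioc (0 : ℝ) 1 → binEnt a = a →
        IsGreatest ((fun α : ℝ => min α (binEnt α)) '' Set.Icc (0 : ℝ) 1) a
        ∧ min a (binEnt a) = a := by
  obtain ⟨a, ha, hfa⟩ := exists_binEnt_eq_self
  have ha' : a ∈ Ioc 0 1 := ⟨lt_of_lt_of_le (by norm_num) ha.1, ha.2⟩
  refine ⟨⟨a, ⟨ha', hfa⟩, fun b hb => binEnt_eq_self_injOn hb.1 hb.2 ha' hfa⟩, ?_⟩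
  intro b hb hfb
  have hmin : min b (binEnt b) = b := by rw [hfb, min_self]
  refine ⟨⟨⟨b, Ioc_subset_Icc_self hb, hmin⟩, ?_⟩, hmin⟩
  rintro _ ⟨α, hα, rfl⟩
  exact min_binEnt_le_of_binEnt_eq_self hb hfb hα
end
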